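/- Let P3 be the kernel of the homomorphism π: B3 → S3 sending σ1 to the transposition (1 2) and σ2 to (2 3), and let R ⊆ P3 be the subgroup generated by r1 = σ1σ2²σ1, r2 = σ1²σ2², r3 = σ2σ1²σ2. Then the quotient group P3/R is isomorphic to Z/2Z. -/

import Mathlib

/-- The braid relation for the braid group on 3 strands:
`σ₁σ₂σ₁ = σ₂σ₁σ₂` as a relator in the free group on two generators. -/
def braidRels : Set (FreeGroup (Fin 2)) :=
  {FreeGroup.of 0 * FreeGroup.of 1 * FreeGroup.of 0 *
    (FreeGroup.of 1)⁻¹ * (FreeGroup.of 0)⁻¹ * (FreeGroup.of 1)⁻¹}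

/-- The braid group `B₃ = ⟨σ₁, σ₂ | σ₁σ₂σ₁ = σ₂σ₁σ₂⟩`. -/
abbrev B3 := PresentedGroup braidRels

def σ1 : B3 := PresentedGroup.of 0
def σ2 : B3 := PresentedGroup.of 1

def r1 : B3 := σ1 * σ2 ^ 2 * σ1
def r2 : B3 := σ1 ^ 2 * σ2 ^ 2
def r3 : B3 := σ2 * σ1 ^ 2 * σ2


def permOfGen : Fin 2 → Equiv.Perm (Fin 3)
  | 0 => Equiv.swap 0 1
  | 1 => Equiv.swap 1 2

theorem relsOK : ∀ r ∈ braidRels, FreeGroup.lift permOfGen r = 1 := by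
  intro r hr
  simp only [braidRels, Set.mem_singleton_iff] at hr
  subst hr
  simp [permOfGen]
  decide

/-- The projection `π : B₃ → S₃`, `σ₁ ↦ (1 2)`, `σ₂ ↦ (2 3)`. -/
def π : B3 →* Equiv.Perm (Fin 3) := PresentedGroup.toGroup relsOK

/-- The subgroup `R` generated by the three flips. -/
def R : Subgroup B3 := Subgroup.closure {r1, r2, r3}

open QuaternionGroup
abbrev Dic3 := QuaternionGroup 3
def dicOfGen : Fin 2 → Dic3
  | 0 => .xa 0
  | 1 => .xa 2
theorem dicRelsOK : ∀ r ∈ braidRels, FreeGroup.lift dicOfGen r = 1 := by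
  intro r hr
  simp only [braidRels, Set.mem_singleton_iff] at hr
  subst hr
  simp [dicOfGen]
  decide
def ρ : B3 →* Dic3 := PresentedGroup.toGroup dicRelsOK
@[simp] theorem ρ_σ1 : ρ σ1 = xa 0 := PresentedGroup.toGroup.of dicRelsOK
@[simp] theorem ρ_σ2 : ρ σ2 = xa 2 := PresentedGroup.toGroup.of dicRelsOK

theorem braid : σ1 * σ2 * σ1 = σ2 * σ1 * σ2 := by
  have h : PresentedGroup.mk braidRels (FreeGroup.of 0 * FreeGroup.of 1 * FreeGroup.of 0 *
      (FreeGroup.of 1)⁻¹ * (FreeGroup.of 0)⁻¹ * (FreeGroup.of 1)⁻¹) = 1 :=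
    (QuotientGroup.eq_one_iff _).mpr (Subgroup.subset_normalClosure rfl)
  have h2 : σ1 * σ2 * σ1 * σ2⁻¹ * σ1⁻¹ * σ2⁻¹ = 1 := by
    simp only [map_mul, map_inv] at h
    exact h
  calc σ1 * σ2 * σ1 = (σ1 * σ2 * σ1 * σ2⁻¹ * σ1⁻¹ * σ2⁻¹) * (σ2 * σ1 * σ2) := by group
  _ = σ2 * σ1 * σ2 := by rw [h2]; group

theorem hRle : R ≤ ρ.ker := by
  rw [R]
  refine (Subgroup.closure_le _).mpr ?_
  rintro x hx
  simp only [Set.mem_insert_iff, Set.mem_singleton_iff] at hx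
  rcases hx with rfl | rfl | rfl <;>
    simp only [SetLike.mem_coe, MonoidHom.mem_ker, r1, r2, r3, map_mul, map_pow, ρ_σ1, ρ_σ2] <;> decide

def v : Equiv.Perm (Fin 3) := (Equiv.swap 0 1 * Equiv.swap 1 2)^2
def hDic : Dic3 →* Equiv.Perm (Fin 3) where
  toFun := fun x => match x with
    | .a i => v ^ i.val
    | .xa i => Equiv.swap 0 1 * v ^ i.val
  map_one' := by decide
  map_mul' := by decide

theorem hπρ : ∀ x : B3, hDic (ρ x) = π x := by
  intro x
  exact PresentedGroup.toGroup.unique relsOK (hDic.comp ρ)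
    (by intro i; fin_cases i <;> simp [ρ, σ1, σ2, dicOfGen] <;> decide)

theorem r1_mem : r1 ∈ R := Subgroup.subset_closure (by simp)
theorem r2_mem : r2 ∈ R := Subgroup.subset_closure (by simp)
theorem r3_mem : r3 ∈ R := Subgroup.subset_closure (by simp)

theorem master (hR : R.Normal) (z : B3) (hz : ρ z = 1) : z ∈ R := by
  letI := hR
  let mk : B3 →* B3 ⧸ R := QuotientGroup.mk' R
  let s : B3 ⧸ R := mk σ1
  let t : B3 ⧸ R := mk σ2
  have hrel : ∀ x ∈ R, mk x = 1 := fun x hx => (QuotientGroup.eq_one_iff x).mpr hx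
  have hb : s * t * s = t * s * t := by
    have := congrArg mk braid
    simpa only [map_mul] using this
  have h1 : s * (t * t) * s = 1 := by
    have := hrel r1 r1_mem
    simpa only [r1, map_mul, map_pow, pow_two, mul_assoc] using this
  have h3 : t * (s * s) * t = 1 := by
    have := hrel r3 r3_mem
    simpa only [r3, map_mul, map_pow, pow_two, mul_assoc] using this
  have e_ts : t * s = (s * t)⁻¹ := by
    have h : (s * t) * (t * s) = 1 := by
      rw [show (s * t) * (t * s) = s * (t * t) * s by group, h1]
    exact (inv_eq_of_mul_eq_one_right h).symm
  have e_s2 : (s * t) ^ (3:ℤ) = s ^ (2:ℤ) := by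
    have h5 : (s * t) ^ (3:ℤ) = s * (t * s * t) * (s * t) := by
      simp only [show (3:ℤ) = 1 + 1 + 1 by norm_num, zpow_add, zpow_one]; group
    rw [h5, ← hb]
    calc s * (s * t * s) * (s * t) = (s * s) * (t * (s * s) * t) := by group
    _ = s * s := by rw [h3, mul_one]
    _ = s ^ (2:ℤ) := by simp only [show (2:ℤ) = 1 + 1 by norm_num, zpow_add, zpow_one]
  have e_conj : s⁻¹ * (s * t) * s = (s * t)⁻¹ := by rw [← e_ts]; group
  have key : ∀ j : ℤ, s⁻¹ * (s * t) ^ j * s = (s * t) ^ (-j) := by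
    intro j
    have h := map_zpow (MulAut.conj s⁻¹) (s * t) j
    simp only [MulAut.conj_apply, inv_inv] at h
    rw [h, e_conj, inv_zpow, ← zpow_neg]
  have comm' : ∀ j : ℤ, s⁻¹ * (s * t) ^ j = (s * t) ^ (-j) * s⁻¹ := by
    intro j
    calc s⁻¹ * (s * t) ^ j = (s⁻¹ * (s * t) ^ j * s) * s⁻¹ := by group
    _ = (s * t) ^ (-j) * s⁻¹ := by rw [key]
  have comm : ∀ j : ℤ, s * (s * t) ^ j = (s * t) ^ (-j) * s := by
    intro j
    have h := key (-j)
    rw [neg_neg] at h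
    calc s * (s * t) ^ j = s * (s⁻¹ * (s * t) ^ (-j) * s) := by rw [h]
    _ = (s * t) ^ (-j) * s := by group
  have e_s4 : s ^ (4:ℤ) = 1 := by
    have h := key 3
    rw [e_s2] at h
    have h2 : (s * t) ^ (-3:ℤ) = (s ^ (2:ℤ))⁻¹ := by rw [← e_s2]; group
    rw [h2] at h
    have h3' : s ^ (2:ℤ) = (s ^ (2:ℤ))⁻¹ := by rw [← h]; group
    calc s ^ (4:ℤ) = s ^ (2:ℤ) * s ^ (2:ℤ) := by group
    _ = s ^ (2:ℤ) * (s ^ (2:ℤ))⁻¹ := by rw [← h3']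
    _ = 1 := by group
  have e_u6 : (s * t) ^ (6:ℤ) = 1 := by
    calc (s * t) ^ (6:ℤ) = (s * t) ^ (3:ℤ) * (s * t) ^ (3:ℤ) := by group
    _ = s ^ (2:ℤ) * s ^ (2:ℤ) := by rw [e_s2]
    _ = s ^ (4:ℤ) := by group
    _ = 1 := e_s4
  have hs_inv : s⁻¹ = (s * t) ^ (-3:ℤ) * s := by
    have h : (s * t) ^ (-3:ℤ) = (s ^ (2:ℤ))⁻¹ := by rw [← e_s2]; group
    rw [h]; group
  let T : Subgroup (B3 ⧸ R) :=
    { carrier := {g | ∃ i : ℤ, g = (s * t) ^ i ∨ g = (s * t) ^ i * s}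
      one_mem' := ⟨0, Or.inl (by group)⟩
      mul_mem' := by
        rintro x y ⟨i, hi | hi⟩ ⟨j, hj | hj⟩ <;> subst hi hj
        · exact ⟨i + j, Or.inl (by rw [zpow_add])⟩
        · exact ⟨i + j, Or.inr (by rw [zpow_add, mul_assoc])⟩
        · refine ⟨i + -j, Or.inr ?_⟩
          calc (s*t) ^ i * s * (s*t) ^ j = (s*t) ^ i * (s * (s*t) ^ j) := by group
          _ = (s*t) ^ i * ((s*t) ^ (-j) * s) := by rw [comm]
          _ = (s*t) ^ (i + -j) * s := by rw [zpow_add]; group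
        · refine ⟨i + -j + 3, Or.inl ?_⟩
          calc (s*t) ^ i * s * ((s*t) ^ j * s) = (s*t) ^ i * (s * (s*t) ^ j) * s := by group
          _ = (s*t) ^ i * ((s*t) ^ (-j) * s) * s := by rw [comm]
          _ = (s*t) ^ (i + -j) * (s * s) := by rw [zpow_add]; group
          _ = (s*t) ^ (i + -j) * s ^ (2:ℤ) := by
              simp only [show (2:ℤ) = 1 + 1 by norm_num, zpow_add, zpow_one]
          _ = (s*t) ^ (i + -j) * (s*t) ^ (3:ℤ) := by rw [e_s2]
          _ = (s*t) ^ (i + -j + 3) := by group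
      inv_mem' := by
        rintro x ⟨i, hi | hi⟩ <;> subst hi
        · exact ⟨-i, Or.inl (by rw [zpow_neg])⟩
        · refine ⟨i + -3, Or.inr ?_⟩
          calc ((s*t) ^ i * s)⁻¹ = s⁻¹ * (s*t) ^ (-i) := by group
          _ = (s*t) ^ i * s⁻¹ := by rw [comm' (-i), neg_neg]
          _ = (s*t) ^ i * ((s*t) ^ (-3:ℤ) * s) := by rw [hs_inv]
          _ = (s*t) ^ (i + -3) * s := by group }
  have cover : ∀ g : B3 ⧸ R, ∃ i : ℤ, g = (s * t) ^ i ∨ g = (s * t) ^ i * s := by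
    intro g
    obtain ⟨w, rfl⟩ := QuotientGroup.mk'_surjective R g
    have hw : w ∈ T.comap mk := by
      refine PresentedGroup.generated_by braidRels (T.comap mk) ?_ w
      intro j
      fin_cases j
      · refine ⟨0, Or.inr ?_⟩
        show s = (s * t) ^ (0:ℤ) * s
        rw [zpow_zero, one_mul]
      · refine ⟨-4, Or.inr ?_⟩
        show t = (s * t) ^ (-4:ℤ) * s
        have h4 : (s * t) ^ (-4:ℤ) * s = s⁻¹ * (s * t) := by
          rw [show (-4:ℤ) = -1 + -3 by norm_num, zpow_add, mul_assoc, ← hs_inv, ← comm' 1,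
            zpow_one]
        rw [h4]
        group
    exact hw
  let ρbar : B3 ⧸ R →* Dic3 := QuotientGroup.lift R ρ (fun x hx => hRle hx)
  have hρu : ρbar (s * t) = xa 0 * xa 2 := by
    rw [map_mul]
    show ρ σ1 * ρ σ2 = _
    rw [ρ_σ1, ρ_σ2]
  have hρs : ρbar s = xa 0 := ρ_σ1
  have hρz : ρbar (mk z) = 1 := hz
  obtain ⟨i, hcase⟩ := cover (mk z)
  have hi6 : (s * t) ^ i = (s * t) ^ (i % 6) := by
    conv_lhs => rw [← Int.mul_ediv_add_emod i 6]
    rw [zpow_add, zpow_mul, e_u6, one_zpow, one_mul]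
  rw [hi6] at hcase
  have h0 : 0 ≤ i % 6 := Int.emod_nonneg i (by norm_num)
  have h6 : i % 6 < 6 := Int.emod_lt_of_pos i (by norm_num)
  set j := i % 6 with hj
  clear_value j
  have hzR : mk z = 1 := by
    interval_cases j <;> rcases hcase with hc | hc <;>
    · have h' := congrArg ρbar hc
      rw [hρz] at h'
      first
        | (rw [map_mul, map_zpow, hρu, hρs] at h'
           exact absurd h' (by decide))
        | (rw [map_zpow, hρu] at h'
           first
             | exact absurd h' (by decide)
             | exact hc.trans (by rw [zpow_zero]))
  exact (QuotientGroup.eq_one_iff z).mp hzR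

theorem hkerh : ∀ d : Dic3, hDic d = 1 → d = 1 ∨ d = a 3 := by decide
theorem hπσ1 : π σ1 = Equiv.swap 0 1 := PresentedGroup.toGroup.of relsOK

/-- `P₃/R ≅ ℤ/2ℤ` where `P₃ = ker π` is the pure braid group and `R` is the
(normal, as given in the context) subgroup generated by `r₁, r₂, r₃`. -/
theorem stmt14 (hR : R.Normal) :
    haveI : (R.subgroupOf π.ker).Normal := hR.subgroupOf π.ker
    Nonempty ((π.ker ⧸ R.subgroupOf π.ker) ≃* Multiplicative (ZMod 2)) := by
  letI := hR
  haveI : (R.subgroupOf π.ker).Normal := hR.subgroupOf π.ker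
  let φ : ↥π.ker →* Dic3 := ρ.comp π.ker.subtype
  have hφR : ∀ x ∈ R.subgroupOf π.ker, φ x = 1 := fun x hx => hRle hx
  let ψ : (π.ker ⧸ R.subgroupOf π.ker) →* Dic3 := QuotientGroup.lift _ φ hφR
  have hinj : Function.Injective ψ := by
    rw [← MonoidHom.ker_eq_bot_iff, eq_bot_iff]
    intro q hq
    induction q using QuotientGroup.induction_on with
    | H x =>
      have hx : ρ (x : B3) = 1 := hq
      have hxR : (x : B3) ∈ R := master hR _ hx
      exact Subgroup.mem_bot.mpr
        ((QuotientGroup.eq_one_iff x).mpr (Subgroup.mem_subgroupOf.mpr hxR))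
  have hσmem : σ1 ^ 2 ∈ π.ker := by
    show π (σ1 ^ 2) = 1
    rw [map_pow, hπσ1]
    decide
  have hrange : ψ.range = Subgroup.zpowers (a 3 : Dic3) := by
    apply le_antisymm
    · rintro d ⟨q, rfl⟩
      induction q using QuotientGroup.induction_on with
      | H x =>
        have hx : π (x : B3) = 1 := x.2
        have h1 : hDic (ρ (x : B3)) = 1 := by rw [hπρ]; exact hx
        have h2 := hkerh _ h1
        show ρ (x : B3) ∈ _
        rcases h2 with h | h <;> rw [h]
        · exact Subgroup.one_mem _
        · exact Subgroup.mem_zpowers _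
    · rw [Subgroup.zpowers_le]
      refine ⟨QuotientGroup.mk ⟨σ1 ^ 2, hσmem⟩, ?_⟩
      show ρ (σ1 ^ 2) = a 3
      rw [map_pow, ρ_σ1]
      decide
  have e1 : (π.ker ⧸ R.subgroupOf π.ker) ≃* ψ.range := MonoidHom.ofInjective hinj
  have e2 : (↥ψ.range) ≃* ↥(Subgroup.zpowers (a 3 : Dic3)) := MulEquiv.subgroupCongr hrange
  haveI hcyc : IsCyclic ↥(Subgroup.zpowers (a 3 : Dic3)) := by
    constructor
    refine ⟨⟨a 3, Subgroup.mem_zpowers _⟩, ?_⟩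
    rintro ⟨x, hx⟩
    obtain ⟨k, hk⟩ := Subgroup.mem_zpowers_iff.mp hx
    refine ⟨k, ?_⟩
    ext
    simpa using hk
  have hcard : Nat.card ↥(Subgroup.zpowers (a 3 : Dic3)) = 2 := by
    rw [Nat.card_zpowers]
    exact orderOf_eq_prime (by decide) (by decide)
  have e3 : (↥(Subgroup.zpowers (a 3 : Dic3))) ≃* Multiplicative (ZMod 2) :=
    mulEquivOfCyclicCardEq (by rw [hcard, Nat.card_eq_fintype_card]; rfl)
  exact Nonempty.intro ((e1.trans e2).trans e3)
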